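/- arXiv:1208.0848 — 2 statements merged into one kernel-verified Lean document; each statement's English description precedes it below -/
import Mathlib

section
/- If E[Y²] < ∞, then for every f ∈ L²_{ρ_X}, the symmetrized least squares error satisfies E^{sls}(f) = 2·Var[f(X) - f_ρ(X)] + 2·C_ρ, where C_ρ = E[(Y - f_ρ(X))²]. -/
/-!
For two independent copies, `∫∫ (g z - g z')² = 2 Var g` with `g(x, y) = y - f x`. Writing
`g = (Y - f_ρ(X)) - (f(X) - f_ρ(X))`, the first term is centred and orthogonal to every square
integrable function of `X` (pull-out property of the conditional expectation), so the variance
splits as `E[(Y - f_ρ(X))²] + Var[f(X) - f_ρ(X)]`. The only technical point is that `f(X)` must be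
measurable with respect to `σ(X)`, which follows from disintegrating `ρ` over its first marginal.
-/

open MeasureTheory ProbabilityTheory

section Variance

variable {Ω : Type*} [MeasurableSpace Ω] {μ : Measure Ω} [IsProbabilityMeasure μ] {g : Ω → ℝ}

lemma integral_sub_const_sq (hg : MemLp g 2 μ) (a : ℝ) :
    ∫ ω, (g ω - a) ^ 2 ∂μ = Var[g; μ] + (μ[g] - a) ^ 2 := by
  have hga : MemLp (fun ω => g ω - a) 2 μ := hg.sub (memLp_const a)
  have hmean : ∫ ω, (g ω - a) ∂μ = μ[g] - a := by
    rw [integral_sub (hg.integrable one_le_two) (integrable_const a)]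
    simp
  have hvar := variance_eq_sub hga
  rw [variance_sub_const hg.1, hmean] at hvar
  rw [hvar]
  simp

lemma integral_integral_sub_sq (hg : MemLp g 2 μ) :
    ∫ ω, ∫ ω', (g ω - g ω') ^ 2 ∂μ ∂μ = 2 * Var[g; μ] := by
  have hinner : ∀ ω, ∫ ω', (g ω - g ω') ^ 2 ∂μ = Var[g; μ] + (g ω - μ[g]) ^ 2 := fun ω => by
    simp_rw [← neg_sub (g _) (g ω), neg_sq, integral_sub_const_sq hg, ← neg_sub (g ω), neg_sq]
  have hsq : Integrable (fun ω => (g ω - μ[g]) ^ 2) μ := (hg.sub (memLp_const _)).integrable_sq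
  simp_rw [hinner]
  rw [integral_add (integrable_const _) hsq, integral_sub_const_sq hg, integral_const, probReal_univ,
    one_smul, sub_self]
  ring

end Variance

section ConditionalExpectation

variable {Ω : Type*} {m m₀ : MeasurableSpace Ω} {μ : Measure[m₀] Ω} {Y W : Ω → ℝ}

lemma integral_sub_condExp_mul_eq_zero [IsFiniteMeasure μ] (hm : m ≤ m₀) (hY : MemLp Y 2 μ)
    (hW : MemLp W 2 μ) (hWm : AEStronglyMeasurable[m] W μ) :
    ∫ ω, (Y ω - μ[Y | m] ω) * W ω ∂μ = 0 := by
  have hWY : Integrable (W * Y) μ := hW.integrable_mul hY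
  have hWc : Integrable (W * μ[Y | m]) μ := hW.integrable_mul (hY.condExp one_le_two)
  have pull_out := condExp_mul_of_aestronglyMeasurable_left hWm hWY (hY.integrable one_le_two)
  calc ∫ ω, (Y ω - μ[Y | m] ω) * W ω ∂μ = ∫ ω, (W * Y) ω ∂μ - ∫ ω, (W * μ[Y | m]) ω ∂μ := by
        rw [← integral_sub hWY hWc]
        congr 1 with ω
        simp only [Pi.mul_apply]
        ring
    _ = 0 := by rw [← integral_condExp hm, integral_congr_ae pull_out, sub_self]

lemma variance_sub_sub_of_ae_eq_condExp [IsProbabilityMeasure μ] (hm : m ≤ m₀) {Ŷ : Ω → ℝ}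
    (hY : MemLp Y 2 μ) (hŶ : Ŷ =ᵐ[μ] μ[Y | m]) (hW : MemLp W 2 μ)
    (hWm : AEStronglyMeasurable[m] W μ) :
    Var[Y - Ŷ - W; μ] = ∫ ω, (Y ω - Ŷ ω) ^ 2 ∂μ + Var[W; μ] := by
  have hŶ2 : MemLp Ŷ 2 μ := (hY.condExp one_le_two).ae_eq hŶ.symm
  have hres : MemLp (Y - Ŷ) 2 μ := hY.sub hŶ2
  have hmean : μ[Y - Ŷ] = 0 := by
    simp only [Pi.sub_apply]
    rw [integral_sub (hY.integrable one_le_two) (hŶ2.integrable one_le_two),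
      integral_congr_ae hŶ, integral_condExp hm, sub_self]
  have hcov : cov[Y - Ŷ, W; μ] = 0 := by
    rw [covariance_eq_sub hres hW, hmean, zero_mul, sub_zero,
      ← integral_sub_condExp_mul_eq_zero hm hY hW hWm]
    refine integral_congr_ae ?_
    filter_upwards [hŶ] with ω hω
    simp [hω]
  rw [variance_sub hres hW, hcov, variance_of_integral_eq_zero hres.aemeasurable hmean]
  simp

end ConditionalExpectation

lemma aestronglyMeasurable_fst_of_comp_fst {X Ω E : Type*} [MeasurableSpace X] [MeasurableSpace Ω]
    [StandardBorelSpace Ω] [Nonempty Ω] [NormedAddCommGroup E] [NormedSpace ℝ E] [CompleteSpace E]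
    {ρ : Measure (X × Ω)} [IsFiniteMeasure ρ] {f : X → E}
    (hf : AEStronglyMeasurable (fun z => f z.1) ρ) : AEStronglyMeasurable f ρ.fst := by
  -- for `ρ.fst`-a.e. `x`, `g (x, ·)` is a.e. the constant `f x`, so its average is a version of `f`
  obtain ⟨g, hg, hfg⟩ := hf
  rw [← ρ.disintegrate ρ.condKernel] at hfg
  refine ⟨fun x => ∫ y, g (x, y) ∂ρ.condKernel x, hg.integral_kernel_prod_right', ?_⟩
  filter_upwards [Measure.ae_ae_of_ae_compProd hfg] with x hx
  rw [integral_congr_ae (hx.mono fun _ hy => hy.symm), integral_const, probReal_univ, one_smul]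

lemma MeasureTheory.AEStronglyMeasurable.comp_comap {α β E : Type*} {mα : MeasurableSpace α}
    [mβ : MeasurableSpace β] [TopologicalSpace E] {μ : Measure α} {φ : α → β} {f : β → E}
    (hf : AEStronglyMeasurable f (μ.map φ)) (hφ : Measurable φ) :
    AEStronglyMeasurable[mβ.comap φ] (f ∘ φ) μ :=
  ⟨hf.mk f ∘ φ, hf.stronglyMeasurable_mk.comp_measurable (comap_measurable φ),
    ae_of_ae_map hφ.aemeasurable hf.ae_eq_mk⟩

/-- If E[Y²] < ∞ then for every f ∈ L²_{ρ_X}, the symmetrized least squares error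
E^{sls}(f) = ∫∫ [(y - f(x)) - (y' - f(x'))]² dρ dρ equals
2·Var[f(X) - f_ρ(X)] + 2·C_ρ with C_ρ = E[(Y - f_ρ(X))²]. -/
theorem stmt_1 {X : Type*} [MeasurableSpace X] (ρ : Measure (X × ℝ))
    [IsProbabilityMeasure ρ] (f frho : X → ℝ)
    (hY : MemLp (fun z : X × ℝ => z.2) 2 ρ)
    (hf : MemLp (fun z : X × ℝ => f z.1) 2 ρ)
    (hfrho : MemLp (fun z : X × ℝ => frho z.1) 2 ρ)
    (hreg : (fun z : X × ℝ => frho z.1)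
      =ᵐ[ρ] ρ[fun z : X × ℝ => z.2 | MeasurableSpace.comap Prod.fst inferInstance]) :
    ∫ z, ∫ z', ((z.2 - f z.1) - (z'.2 - f z'.1)) ^ 2 ∂ρ ∂ρ
      = 2 * variance (fun z : X × ℝ => f z.1 - frho z.1) ρ
        + 2 * ∫ z, (z.2 - frho z.1) ^ 2 ∂ρ := by
  have hfm : AEStronglyMeasurable[MeasurableSpace.comap Prod.fst inferInstance]
      (fun z : X × ℝ => f z.1) ρ :=
    (aestronglyMeasurable_fst_of_comp_fst hf.1).comp_comap measurable_fst
  have hfrhom : AEStronglyMeasurable[MeasurableSpace.comap Prod.fst inferInstance]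
      (fun z : X × ℝ => frho z.1) ρ :=
    ⟨_, stronglyMeasurable_condExp, hreg⟩
  have hdecomp : (fun z : X × ℝ => z.2 - f z.1)
      = (fun z => z.2) - (fun z => frho z.1) - (fun z => f z.1 - frho z.1) := by
    ext z
    simp only [Pi.sub_apply]
    ring
  rw [integral_integral_sub_sq (g := fun z : X × ℝ => z.2 - f z.1) (hY.sub hf), hdecomp,
    variance_sub_sub_of_ae_eq_condExp (W := fun z => f z.1 - frho z.1) measurable_fst.comap_le hY
      hreg (hf.sub hfrho)
      (hfm.sub hfrhom)]
  ring
end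

section
/- If |Y| ≤ M almost surely, then almost surely |U_f(z,z')| ≤ 36 C_G (M + sup_{f∈H}‖f‖_∞) · |(f(x) - f_ρ(x)) - (f(x') - f_ρ(x'))| for all f ∈ H, and similarly |U_f - U_g| ≤ 36 C_G (M + sup_{f∈H}‖f‖_∞) · |(f(x) - g(x)) - (f(x') - g(x'))| for f, g ∈ H. -/
/-!
`U_f` is a difference of two values of `φ(u) = h² G(u² / (2h²))` at residual differences
`u = (y - f x) - (y' - f x')`. Since `φ'(u) = u G'(u² / (2h²))` and `|G'| ≤ C_G` on `[0, ∞)`,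
the mean value theorem on the interval containing all residual differences makes `φ` Lipschitz
there, and the difference of the two arguments is `(f x - g x) - (f x' - g x')`.
-/

open Set

/-- `U_f(z, z') = lossProfile G h r_ρ - lossProfile G h r_f`, where
`r_f = (y - f x) - (y' - f x')`. -/
noncomputable def lossProfile (G : ℝ → ℝ) (h u : ℝ) : ℝ :=
  h ^ 2 * G (u ^ 2 / (2 * h ^ 2))

section lossProfile

variable {G : ℝ → ℝ} {C h : ℝ}

lemma abs_deriv_le_of_weighted_bound
    (hCG : ∀ t ∈ Ici (0 : ℝ), |(1 + t) * deriv G t| + |(1 + t) * deriv (deriv G) t| ≤ C)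
    {t : ℝ} (ht : 0 ≤ t) : |deriv G t| ≤ C :=
  calc |deriv G t| ≤ |1 + t| * |deriv G t| := by
        rw [abs_of_nonneg (a := 1 + t) (by linarith)]
        exact le_mul_of_one_le_left (abs_nonneg _) (by linarith)
    _ ≤ C := by
        rw [← abs_mul]
        linarith [hCG t ht, abs_nonneg ((1 + t) * deriv (deriv G) t)]

/-- Written with the factor `h² / h²`, the formula also holds for `h = 0`, where the profile
vanishes identically. -/
lemma hasDerivAt_lossProfile (hG : Differentiable ℝ G) (u : ℝ) :
    HasDerivAt (lossProfile G h) (h ^ 2 / h ^ 2 * u * deriv G (u ^ 2 / (2 * h ^ 2))) u := by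
  have hsq : HasDerivAt (fun u : ℝ => u ^ 2 / (2 * h ^ 2)) (2 * u / (2 * h ^ 2)) u := by
    simpa using (hasDerivAt_pow 2 u).div_const (2 * h ^ 2)
  exact (((hG _).hasDerivAt.comp u hsq).const_mul (h ^ 2)).congr_deriv (by ring)

lemma abs_lossProfile_sub_le (hG : Differentiable ℝ G)
    (hG' : ∀ t, 0 ≤ t → |deriv G t| ≤ C) {B a b : ℝ} (ha : |a| ≤ B) (hb : |b| ≤ B) :
    |lossProfile G h b - lossProfile G h a| ≤ C * B * |b - a| := by
  have hderiv_le : ∀ u ∈ Icc (-B) B,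
      ‖h ^ 2 / h ^ 2 * u * deriv G (u ^ 2 / (2 * h ^ 2))‖ ≤ C * B := by
    intro u hu
    rw [Real.norm_eq_abs, abs_mul, abs_mul, abs_of_nonneg (by positivity), mul_comm C]
    calc h ^ 2 / h ^ 2 * |u| * |deriv G (u ^ 2 / (2 * h ^ 2))|
        ≤ 1 * |u| * |deriv G (u ^ 2 / (2 * h ^ 2))| := by gcongr; exact div_self_le_one _
      _ ≤ B * C := by
        rw [one_mul]
        exact mul_le_mul (abs_le.mpr hu) (hG' _ (by positivity)) (abs_nonneg _)
          ((abs_nonneg a).trans ha)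
  exact (convex_Icc (-B) B).norm_image_sub_le_of_norm_hasDerivWithin_le
    (fun u _ => (hasDerivAt_lossProfile hG u).hasDerivWithinAt) hderiv_le
    (abs_le.mp ha) (abs_le.mp hb)

lemma abs_sub_sub_sub_le {M K y y' p p' : ℝ} (hy : |y| ≤ M) (hy' : |y'| ≤ M)
    (hp : |p| ≤ K) (hp' : |p'| ≤ K) : |(y - p) - (y' - p')| ≤ 2 * (M + K) := by
  rw [abs_le] at *
  constructor <;> linarith

lemma abs_lossProfile_residual_sub_le (hG : Differentiable ℝ G)
    (hG' : ∀ t, 0 ≤ t → |deriv G t| ≤ C) {M K y y' p p' q q' : ℝ}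
    (hy : |y| ≤ M) (hy' : |y'| ≤ M) (hp : |p| ≤ K) (hp' : |p'| ≤ K)
    (hq : |q| ≤ K) (hq' : |q'| ≤ K) :
    |lossProfile G h ((y - q) - (y' - q')) - lossProfile G h ((y - p) - (y' - p'))|
      ≤ C * (2 * (M + K)) * |(p - q) - (p' - q')| := by
  have hlip := abs_lossProfile_sub_le (h := h) hG hG' (abs_sub_sub_sub_le hy hy' hp hp')
    (abs_sub_sub_sub_le hy hy' hq hq')
  rwa [show (y - q - (y' - q')) - (y - p - (y' - p')) = (p - q) - (p' - q') by ring] at hlip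

end lossProfile

theorem stmt_12_general {X : Type*} (G : ℝ → ℝ) (CG h M supH : ℝ) (hG : ContDiff ℝ 2 G)
    (hCG : ∀ t ∈ Set.Ici (0 : ℝ),
      |(1 + t) * deriv G t| + |(1 + t) * deriv (deriv G) t| ≤ CG)
    (H : Set (X → ℝ)) (frho : X → ℝ)
    (hsupH : ∀ f ∈ H, ∀ x, |f x| ≤ supH) (hMrho : ∀ x, |frho x| ≤ M) :
    (∀ f ∈ H, ∀ (x x' : X) (y y' : ℝ), |y| ≤ M → |y'| ≤ M →
      |(-h ^ 2 * G (((y - f x) - (y' - f x')) ^ 2 / (2 * h ^ 2)))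
          + h ^ 2 * G (((y - frho x) - (y' - frho x')) ^ 2 / (2 * h ^ 2))|
        ≤ 36 * CG * (M + supH) * |(f x - frho x) - (f x' - frho x')|)
    ∧ (∀ f ∈ H, ∀ g ∈ H, ∀ (x x' : X) (y y' : ℝ), |y| ≤ M → |y'| ≤ M →
      |(-h ^ 2 * G (((y - f x) - (y' - f x')) ^ 2 / (2 * h ^ 2)))
          + h ^ 2 * G (((y - g x) - (y' - g x')) ^ 2 / (2 * h ^ 2))|
        ≤ 36 * CG * (M + supH) * |(f x - g x) - (f x' - g x')|) := by
  have hG' : ∀ t, 0 ≤ t → |deriv G t| ≤ CG := fun _ => abs_deriv_le_of_weighted_bound hCG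
  have hCG0 : 0 ≤ CG := (abs_nonneg _).trans (hG' 0 le_rfl)
  have hU_le : ∀ {y y' p p' q q' : ℝ}, |y| ≤ M → |y'| ≤ M → |p| ≤ supH → |p'| ≤ supH →
      |q| ≤ M + supH → |q'| ≤ M + supH →
      |(-h ^ 2 * G (((y - p) - (y' - p')) ^ 2 / (2 * h ^ 2)))
          + h ^ 2 * G (((y - q) - (y' - q')) ^ 2 / (2 * h ^ 2))|
        ≤ 36 * CG * (M + supH) * |(p - q) - (p' - q')| := by
    intro y y' p p' q q' hy hy' hp hp' hq hq'
    have hM : 0 ≤ M := (abs_nonneg y).trans hy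
    have hS : 0 ≤ supH := (abs_nonneg p).trans hp
    have hlip := abs_lossProfile_residual_sub_le (h := h) (hG.differentiable (by norm_num)) hG'
      hy hy' (hp.trans (le_add_of_nonneg_left hM)) (hp'.trans (le_add_of_nonneg_left hM))
      hq hq'
    rw [neg_mul, neg_add_eq_sub]
    refine hlip.trans (mul_le_mul_of_nonneg_right ?_ (abs_nonneg _))
    nlinarith [mul_nonneg hCG0 hM, mul_nonneg hCG0 hS]
  constructor
  · intro f hf x x' y y' hy hy'
    have hS : 0 ≤ supH := (abs_nonneg _).trans (hsupH f hf x)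
    exact hU_le hy hy' (hsupH f hf x) (hsupH f hf x')
      ((hMrho x).trans (le_add_of_nonneg_right hS)) ((hMrho x').trans (le_add_of_nonneg_right hS))
  · intro f hf g hg x x' y y' hy hy'
    have hM : 0 ≤ M := (abs_nonneg y).trans hy
    exact hU_le hy hy' (hsupH f hf x) (hsupH f hf x')
      ((hsupH g hg x).trans (le_add_of_nonneg_left hM))
      ((hsupH g hg x').trans (le_add_of_nonneg_left hM))

/-- Bounded-output kernel estimates: if |Y| ≤ M, then for all f, g in the hypothesis
space H (uniformly bounded by supH), with A'_H = 36 C_G (M + supH),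
|U_f(z,z')| ≤ A'_H |(f(x)-f_ρ(x)) - (f(x')-f_ρ(x'))| and
|U_f - U_g| ≤ A'_H |(f(x)-g(x)) - (f(x')-g(x'))|. -/
theorem stmt_12 {X : Type*} (G : ℝ → ℝ) (CG h M supH : ℝ) (hG : ContDiff ℝ 2 G)
    (hCG : ∀ t ∈ Set.Ici (0 : ℝ),
      |(1 + t) * deriv G t| + |(1 + t) * deriv (deriv G) t| ≤ CG)
    (hh : 1 ≤ h) (H : Set (X → ℝ)) (frho : X → ℝ)
    (hsupH : ∀ f ∈ H, ∀ x, |f x| ≤ supH) (hMrho : ∀ x, |frho x| ≤ M) :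
    (∀ f ∈ H, ∀ (x x' : X) (y y' : ℝ), |y| ≤ M → |y'| ≤ M →
      |(-h ^ 2 * G (((y - f x) - (y' - f x')) ^ 2 / (2 * h ^ 2)))
          + h ^ 2 * G (((y - frho x) - (y' - frho x')) ^ 2 / (2 * h ^ 2))|
        ≤ 36 * CG * (M + supH) * |(f x - frho x) - (f x' - frho x')|)
    ∧ (∀ f ∈ H, ∀ g ∈ H, ∀ (x x' : X) (y y' : ℝ), |y| ≤ M → |y'| ≤ M →
      |(-h ^ 2 * G (((y - f x) - (y' - f x')) ^ 2 / (2 * h ^ 2)))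
          + h ^ 2 * G (((y - g x) - (y' - g x')) ^ 2 / (2 * h ^ 2))|
        ≤ 36 * CG * (M + supH) * |(f x - g x) - (f x' - g x')|) :=
  stmt_12_general G CG h M supH hG hCG H frho hsupH hMrho
end
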